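/- For every real t and every complex sequence (c_n) with c_0 = 0 whose difference sequence (c_n − c_{n−1}) is in ℓ², the sequence (e^{it log n} c_n − e^{it log(n−1)} c_{n−1})_{n≥1} (with the convention e^{it log 0}c_0 = 0) is in ℓ², and there is a constant C (depending only on t) with ∑_n |e^{it log n} c_n − e^{it log(n−1)} c_{n−1}|² ≤ C ∑_n |c_n − c_{n−1}|². -/

import Mathlib

/-!
Write `e n = exp (i t log n)` and `a n = ‖c (n + 1) - c n‖`. Then
`e (n+1) c (n+1) - e n c n = e (n+1) (c (n+1) - c n) + (e (n+1) - e n) c n`, where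
`|e (n+1) - e n| ≤ |t| (log (n+1) - log n) ≤ |t| / n` and `‖c n‖ ≤ a 0 + ⋯ + a (n-1)`.
So the second term is at most `|t|` times the Cesàro mean of `a`, whose square sum is at most
`4 ∑ a n ^ 2` by Hardy's inequality.
-/

open Complex Finset

noncomputable def cesaroMean (a : ℕ → ℝ) (n : ℕ) : ℝ := (∑ k ∈ range n, a k) / n

section Hardy

variable (a : ℕ → ℝ)

lemma natCast_mul_cesaroMean (n : ℕ) : n * cesaroMean a n = ∑ k ∈ range n, a k := by
  rcases n.eq_zero_or_pos with rfl | hn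
  · simp
  · exact mul_div_cancel₀ _ (by positivity)

lemma succ_mul_cesaroMean_succ (n : ℕ) :
    (n + 1) * cesaroMean a (n + 1) = n * cesaroMean a n + a n := by
  rw [← Nat.cast_succ, natCast_mul_cesaroMean, natCast_mul_cesaroMean, sum_range_succ]

/-- The telescoping step of Elliott's proof of Hardy's inequality (`x`, `y` consecutive means). -/
lemma sq_sub_two_mul_le_of_add_one_mul_eq {x y b m : ℝ} (hm : 0 ≤ m)
    (h : (m + 1) * x = m * y + b) : x ^ 2 - 2 * (x * b) ≤ m * y ^ 2 - (m + 1) * x ^ 2 := by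
  obtain rfl : b = (m + 1) * x - m * y := by linarith
  nlinarith [mul_nonneg hm (sq_nonneg (x - y))]

lemma sum_range_sq_cesaroMean_succ_le (N : ℕ) :
    ∑ n ∈ range N, cesaroMean a (n + 1) ^ 2 ≤ 2 * ∑ n ∈ range N, cesaroMean a (n + 1) * a n := by
  have step : ∀ n ∈ range N, cesaroMean a (n + 1) ^ 2 - 2 * (cesaroMean a (n + 1) * a n) ≤
      (n : ℝ) * cesaroMean a n ^ 2 - ((n + 1 : ℕ) : ℝ) * cesaroMean a (n + 1) ^ 2 := fun n _ => by
    push_cast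
    exact sq_sub_two_mul_le_of_add_one_mul_eq n.cast_nonneg (succ_mul_cesaroMean_succ a n)
  have htel := sum_le_sum step
  rw [sum_range_sub' (fun n => (n : ℝ) * cesaroMean a n ^ 2), sum_sub_distrib, ← mul_sum] at htel
  have hlast : 0 ≤ (N : ℝ) * cesaroMean a N ^ 2 := by positivity
  simp only [Nat.cast_zero, zero_mul, zero_sub] at htel
  linarith

theorem sum_range_sq_cesaroMean_le (N : ℕ) :
    ∑ n ∈ range N, cesaroMean a n ^ 2 ≤ 4 * ∑ n ∈ range N, a n ^ 2 := by
  have hCS := sum_mul_sq_le_sq_mul_sq (range N) (fun n => cesaroMean a (n + 1)) a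
  have hS := sum_range_sq_cesaroMean_succ_le a N
  set S := ∑ n ∈ range N, cesaroMean a (n + 1) ^ 2
  set P := ∑ n ∈ range N, cesaroMean a (n + 1) * a n
  set T := ∑ n ∈ range N, a n ^ 2
  have hS0 : 0 ≤ S := sum_nonneg fun n _ => sq_nonneg _
  have hT0 : 0 ≤ T := sum_nonneg fun n _ => sq_nonneg _
  have hSS : S * S ≤ S * (4 * T) :=
    calc S * S ≤ (2 * P) * (2 * P) := mul_le_mul hS hS hS0 (hS0.trans hS)
      _ = 4 * P ^ 2 := by ring
      _ ≤ S * (4 * T) := by linarith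
  have hS4 : S ≤ 4 * T := by
    rcases hS0.eq_or_lt with h | h
    · linarith
    · exact le_of_mul_le_mul_left hSS h
  calc ∑ n ∈ range N, cesaroMean a n ^ 2 ≤ ∑ n ∈ range (N + 1), cesaroMean a n ^ 2 :=
        sum_le_sum_of_subset_of_nonneg (range_subset_range.2 N.le_succ) fun _ _ _ => sq_nonneg _
    _ = S := by simp [S, sum_range_succ', cesaroMean]
    _ ≤ 4 * T := hS4

variable {a}

theorem summable_sq_cesaroMean (ha : Summable fun n => a n ^ 2) :
    Summable fun n => cesaroMean a n ^ 2 :=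
  summable_of_sum_range_le (fun _ => sq_nonneg _) fun N =>
    (sum_range_sq_cesaroMean_le a N).trans <|
      mul_le_mul_of_nonneg_left (ha.sum_le_tsum _ fun _ _ => sq_nonneg _) zero_le_four

theorem tsum_sq_cesaroMean_le (ha : Summable fun n => a n ^ 2) :
    ∑' n, cesaroMean a n ^ 2 ≤ 4 * ∑' n, a n ^ 2 :=
  Real.tsum_le_of_sum_range_le (fun _ => sq_nonneg _) fun N =>
    (sum_range_sq_cesaroMean_le a N).trans <|
      mul_le_mul_of_nonneg_left (ha.sum_le_tsum _ fun _ _ => sq_nonneg _) zero_le_four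

end Hardy

theorem norm_le_sum_range_norm_sub {E : Type*} [SeminormedAddCommGroup E] {c : ℕ → E}
    (hc0 : c 0 = 0) (n : ℕ) : ‖c n‖ ≤ ∑ k ∈ range n, ‖c (k + 1) - c k‖ := by
  simpa [hc0, dist_eq_norm_sub'] using dist_le_range_sum_dist c n

section Multiplier

variable {R : Type*} [SeminormedRing R] {u c : ℕ → R} {K : ℝ}

lemma norm_sub_mul_le_mul_cesaroMean (hdu : ∀ n : ℕ, n * ‖u (n + 1) - u n‖ ≤ K)
    (hc0 : c 0 = 0) (n : ℕ) :
    ‖(u (n + 1) - u n) * c n‖ ≤ K * cesaroMean (fun k => ‖c (k + 1) - c k‖) n := by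
  rcases n.eq_zero_or_pos with rfl | hn
  · simp [hc0, cesaroMean]
  have hK : 0 ≤ K := by simpa using hdu 0
  rw [cesaroMean, mul_div_assoc', le_div_iff₀ (by positivity)]
  calc ‖(u (n + 1) - u n) * c n‖ * n ≤ (n * ‖u (n + 1) - u n‖) * ‖c n‖ := by
        nlinarith [norm_mul_le (u (n + 1) - u n) (c n), (n.cast_nonneg : (0 : ℝ) ≤ n)]
    _ ≤ K * ∑ k ∈ range n, ‖c (k + 1) - c k‖ :=
        mul_le_mul (hdu n) (norm_le_sum_range_norm_sub hc0 n) (norm_nonneg _) hK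

lemma norm_mul_sub_mul_le (hu : ∀ n, ‖u n‖ ≤ 1) (hdu : ∀ n : ℕ, n * ‖u (n + 1) - u n‖ ≤ K)
    (hc0 : c 0 = 0) (n : ℕ) :
    ‖u (n + 1) * c (n + 1) - u n * c n‖ ≤
      ‖c (n + 1) - c n‖ + K * cesaroMean (fun k => ‖c (k + 1) - c k‖) n := by
  rw [show u (n + 1) * c (n + 1) - u n * c n =
      u (n + 1) * (c (n + 1) - c n) + (u (n + 1) - u n) * c n by noncomm_ring]
  refine (norm_add_le _ _).trans (add_le_add ?_ (norm_sub_mul_le_mul_cesaroMean hdu hc0 n))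
  exact (norm_mul_le _ _).trans (mul_le_of_le_one_left (norm_nonneg _) (hu _))

theorem summable_and_tsum_norm_mul_sub_mul_sq_le (hu : ∀ n, ‖u n‖ ≤ 1)
    (hdu : ∀ n : ℕ, n * ‖u (n + 1) - u n‖ ≤ K) (hc0 : c 0 = 0)
    (hc : Summable fun n => ‖c (n + 1) - c n‖ ^ 2) :
    Summable (fun n => ‖u (n + 1) * c (n + 1) - u n * c n‖ ^ 2) ∧
      ∑' n, ‖u (n + 1) * c (n + 1) - u n * c n‖ ^ 2 ≤
        (2 + 8 * K ^ 2) * ∑' n, ‖c (n + 1) - c n‖ ^ 2 := by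
  set m := cesaroMean fun k => ‖c (k + 1) - c k‖
  have hm : Summable fun n => m n ^ 2 := summable_sq_cesaroMean hc
  have hbound : ∀ n, ‖u (n + 1) * c (n + 1) - u n * c n‖ ^ 2 ≤
      2 * (‖c (n + 1) - c n‖ ^ 2 + K ^ 2 * m n ^ 2) := fun n =>
    calc _ ≤ (‖c (n + 1) - c n‖ + K * m n) ^ 2 :=
          pow_le_pow_left₀ (norm_nonneg _) (norm_mul_sub_mul_le hu hdu hc0 n) 2
      _ ≤ _ := by rw [← mul_pow]; exact add_sq_le
  have hsum : Summable fun n => 2 * (‖c (n + 1) - c n‖ ^ 2 + K ^ 2 * m n ^ 2) :=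
    (hc.add (hm.mul_left _)).mul_left 2
  have hD := hsum.of_nonneg_of_le (fun _ => sq_nonneg _) hbound
  refine ⟨hD, ?_⟩
  calc _ ≤ ∑' n, 2 * (‖c (n + 1) - c n‖ ^ 2 + K ^ 2 * m n ^ 2) := hD.tsum_le_tsum hbound hsum
    _ = 2 * (∑' n, ‖c (n + 1) - c n‖ ^ 2 + K ^ 2 * ∑' n, m n ^ 2) := by
        rw [tsum_mul_left, hc.tsum_add (hm.mul_left _), tsum_mul_left]
    _ ≤ _ := by nlinarith [tsum_sq_cesaroMean_le hc, sq_nonneg K]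

end Multiplier

theorem Real.log_add_one_sub_log_le {x : ℝ} (hx : 0 < x) :
    Real.log (x + 1) - Real.log x ≤ x⁻¹ := by
  rw [← Real.log_div (by positivity) hx.ne']
  calc Real.log ((x + 1) / x) ≤ (x + 1) / x - 1 := Real.log_le_sub_one_of_pos (by positivity)
    _ = x⁻¹ := by field_simp; ring

theorem Complex.norm_exp_I_mul_ofReal_sub_exp_I_mul_ofReal_le (x y : ℝ) :
    ‖exp (I * x) - exp (I * y)‖ ≤ |x - y| := by
  rw [show exp (I * x) - exp (I * y) = exp (I * y) * (exp (I * ↑(x - y)) - 1) by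
    rw [mul_sub, mul_one, ← exp_add]; push_cast; ring_nf]
  rw [norm_mul, norm_exp_I_mul_ofReal, one_mul]
  exact Real.norm_exp_I_mul_ofReal_sub_one_le

lemma natCast_mul_norm_exp_log_succ_sub_le (t : ℝ) (n : ℕ) :
    n * ‖exp (I * t * Real.log (n + 1 : ℕ)) - exp (I * t * Real.log n)‖ ≤ |t| := by
  rcases n.eq_zero_or_pos with rfl | hn
  · simp
  have hn' : (0 : ℝ) < n := by exact_mod_cast hn
  have hlog : 0 ≤ Real.log (n + 1) - Real.log n :=
    sub_nonneg.2 (Real.log_le_log hn' (by linarith))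
  simp_rw [mul_assoc I, ← ofReal_mul]
  calc (n : ℝ) * ‖exp (I * ↑(t * Real.log (n + 1 : ℕ))) - exp (I * ↑(t * Real.log n))‖
      ≤ n * (|t| * (Real.log (n + 1) - Real.log n)) := by
        gcongr
        refine (norm_exp_I_mul_ofReal_sub_exp_I_mul_ofReal_le _ _).trans_eq ?_
        rw [Nat.cast_succ, ← mul_sub, abs_mul, abs_of_nonneg hlog]
    _ ≤ n * (|t| * (n : ℝ)⁻¹) := by gcongr; exact Real.log_add_one_sub_log_le hn'
    _ = |t| := by field_simp

/-- Multiplication by `(e^{it log n})` is bounded on `ℓ²(Δ)`: for every `t` there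
is a constant `C` such that for every sequence `c` (indexed from `1`, with
`c 0 = 0`, and the convention `e^{it log 0} c 0 = 0`) whose first differences are
square-summable, the first differences of `(e^{it log n} c_n)` are also
square-summable with `∑ |e^{it log n} cₙ - e^{it log (n-1)} c_{n-1}|² ≤ C ∑ |cₙ - c_{n-1}|²`. -/
theorem mult_by_eitlogn_bounded_on_l2Delta (t : ℝ) :
    ∃ C : ℝ, ∀ c : ℕ → ℂ, c 0 = 0 →
      Summable (fun n : ℕ => ‖c (n + 1) - c n‖ ^ 2) →
      Summable (fun n : ℕ =>
        ‖Complex.exp (Complex.I * t * Real.log (n + 1)) * c (n + 1) -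
          Complex.exp (Complex.I * t * Real.log n) * c n‖ ^ 2) ∧
      (∑' n : ℕ,
        ‖Complex.exp (Complex.I * t * Real.log (n + 1)) * c (n + 1) -
          Complex.exp (Complex.I * t * Real.log n) * c n‖ ^ 2)
        ≤ C * ∑' n : ℕ, ‖c (n + 1) - c n‖ ^ 2 := by
  refine ⟨2 + 8 * |t| ^ 2, fun c hc0 hc => ?_⟩
  have hu (n : ℕ) : ‖exp (I * t * Real.log n)‖ ≤ 1 := by
    rw [mul_assoc, ← ofReal_mul, norm_exp_I_mul_ofReal]
  simpa only [Nat.cast_succ] using summable_and_tsum_norm_mul_sub_mul_sq_le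
    (u := fun n : ℕ => exp (I * t * Real.log n)) hu (natCast_mul_norm_exp_log_succ_sub_le t) hc0 hc
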